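/- arXiv:2311.16850 — 2 statements merged into one kernel-verified Lean document; each statement's English description precedes it below -/
import Mathlib

section
/- Let f : ℝⁿ → ℝ be a C¹-smooth function and let sequences {x^k} ⊂ ℝⁿ, {τ_k} ⊂ [0, ∞), {d^k} ⊂ ℝⁿ satisfy x^{k+1} = x^k + τ_k d^k for all k. Assume there exist α, β > 0 such that for all sufficiently large k: x^{k+1} ≠ x^k, f(x^k) − f(x^{k+1}) ≥ β τ_k ‖d^k‖², and ‖∇f(x^k)‖ ≤ α‖d^k‖. Assume also that there is τ̄ > 0 with τ_k ≥ τ̄ for all sufficiently large k, that x̄ is an accumulation point of {x^k}, and that f satisfies the KL property at x̄ with ψ(t) = M t^q for some M > 0 and q ∈ (1/2, 1). Then there exist M' > 0 and N ∈ ℕ such that ‖x^k − x̄‖ ≤ M' k^{−(1−q)/(2q−1)} for all k ≥ N. -/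
open Filter Topology

lemma aux_bern {t p : ℝ} (ht : 0 ≤ t) (hp0 : 0 ≤ p) (hp1 : p ≤ 1) :
    t ^ p ≤ 1 + p * (t - 1) := by
  have h := Real.geom_mean_le_arith_mean2_weighted hp0 (by linarith : (0:ℝ) ≤ 1 - p)
    ht zero_le_one (by ring)
  rw [Real.one_rpow] at h
  linarith [h]

lemma aux_concave {a b q : ℝ} (hb : 0 ≤ b) (ha : 0 < a)
    (hq0 : 0 < q) (hq1 : q < 1) :
    (1 - q) * (a - b) ≤ a ^ q * (a ^ (1 - q) - b ^ (1 - q)) := by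
  have hgm := Real.geom_mean_le_arith_mean2_weighted hq0.le (by linarith : (0:ℝ) ≤ 1 - q)
    ha.le hb (by ring)
  have haa : a ^ q * a ^ (1 - q) = a := by
    rw [← Real.rpow_add ha]; simp
  have : a ^ q * (a ^ (1 - q) - b ^ (1 - q)) = a - a ^ q * b ^ (1 - q) := by
    rw [mul_sub, haa]
  rw [this]; linarith

lemma aux_rate {a b c p : ℝ} (ha : 0 < a) (hb : 0 < b) (hc : 0 < c)
    (hp : 0 < p) (hp1 : p ≤ 1) (h : b ≤ a - c * a ^ (p + 1)) :
    a ^ (-p) + p * c ≤ b ^ (-p) := by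
  set x := c * a ^ p with hxdef
  have hx0 : 0 < x := mul_pos hc (Real.rpow_pos_of_pos ha p)
  have hap1 : a ^ (p + 1) = a ^ p * a := by rw [Real.rpow_add ha, Real.rpow_one]
  have hfact : a - c * a ^ (p + 1) = a * (1 - x) := by rw [hap1, hxdef]; ring
  have hb' : b ≤ a * (1 - x) := by rw [← hfact]; exact h
  have h1x : 0 < 1 - x := by
    have := hb.trans_le hb'
    by_contra hcon
    push_neg at hcon
    nlinarith
  have hbern : (1 - x) ^ p ≤ 1 - p * x := by
    have := aux_bern h1x.le hp.le hp1
    linarith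
  have hpx : 0 < 1 - p * x := lt_of_lt_of_le (Real.rpow_pos_of_pos h1x p) hbern
  have hkey : 1 + p * x ≤ (1 - x) ^ (-p) := by
    rw [Real.rpow_neg h1x.le, ← one_div, le_div_iff₀ (Real.rpow_pos_of_pos h1x p)]
    nlinarith [mul_le_mul_of_nonneg_left hbern (by positivity : (0:ℝ) ≤ 1 + p * x),
      sq_nonneg (p * x)]
  have hmono : (a * (1 - x)) ^ (-p) ≤ b ^ (-p) :=
    Real.rpow_le_rpow_of_nonpos hb hb' (by linarith)
  have hmul : (a * (1 - x)) ^ (-p) = a ^ (-p) * (1 - x) ^ (-p) :=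
    Real.mul_rpow ha.le h1x.le
  have hap : 0 < a ^ (-p) := Real.rpow_pos_of_pos ha _
  have hfin : a ^ (-p) + p * c ≤ a ^ (-p) * (1 - x) ^ (-p) := by
    have h1 : a ^ (-p) * (1 + p * x) ≤ a ^ (-p) * (1 - x) ^ (-p) :=
      mul_le_mul_of_nonneg_left hkey hap.le
    have hxa : a ^ (-p) * x = c := by
      rw [hxdef]
      have : a ^ (-p) * (c * a ^ p) = c * (a ^ (-p) * a ^ p) := by ring
      rw [this, ← Real.rpow_add ha]
      simp
    nlinarith [h1, hxa]
  rw [hmul] at hmono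
  linarith

set_option maxHeartbeats 1000000 in
/-- Sublinear convergence rate O(k^{−(1−q)/(2q−1)}) of a linesearch-type
sequence under the KL property with exponent q ∈ (1/2, 1). -/
theorem stmt_5 {n : ℕ} (f : EuclideanSpace ℝ (Fin n) → ℝ) (hf : ContDiff ℝ 1 f)
    (x d : ℕ → EuclideanSpace ℝ (Fin n)) (τ : ℕ → ℝ) (hτnonneg : ∀ k, 0 ≤ τ k)
    (hiter : ∀ k, x (k + 1) = x k + τ k • d k)
    (α β : ℝ) (hα : 0 < α) (hβ : 0 < β)
    (hcond : ∀ᶠ k in atTop, x (k + 1) ≠ x k ∧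
      β * τ k * ‖d k‖ ^ 2 ≤ f (x k) - f (x (k + 1)) ∧
      ‖gradient f (x k)‖ ≤ α * ‖d k‖)
    (hτbdd : ∃ τbar > (0 : ℝ), ∀ᶠ k in atTop, τbar ≤ τ k)
    (xbar : EuclideanSpace ℝ (Fin n))
    (hacc : ∃ φ : ℕ → ℕ, StrictMono φ ∧ Tendsto (fun j => x (φ j)) atTop (𝓝 xbar))
    (M q : ℝ) (hM : 0 < M) (hq : q ∈ Set.Ioo (1 / 2 : ℝ) 1)
    (hKL : ∃ η > (0 : ℝ), ∃ U ∈ 𝓝 xbar, ∀ y ∈ U, f xbar < f y → f y < f xbar + η →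
      M * (f y - f xbar) ^ q ≤ ‖gradient f y‖) :
    ∃ M' > (0 : ℝ), ∃ N : ℕ, ∀ k ≥ N,
      ‖x k - xbar‖ ≤ M' * (k : ℝ) ^ (-(1 - q) / (2 * q - 1)) := by
  obtain ⟨hq2, hq1⟩ := hq
  obtain ⟨τbar, hτbar, hτev⟩ := hτbdd
  obtain ⟨φ, hφ, hconv⟩ := hacc
  obtain ⟨η, hη, U, hU, hKL⟩ := hKL
  -- uniform starting index for all eventual conditions
  obtain ⟨N0, hN0⟩ := (hcond.and hτev).exists_forall_of_atTop
  -- abbreviations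
  set Δ : ℕ → ℝ := fun k => f (x k) - f xbar with hΔdef
  set p : ℝ := 2 * q - 1 with hpdef
  have hp0 : 0 < p := by simp only [hpdef]; linarith
  have hp1 : p < 1 := by simp only [hpdef]; linarith
  have h1q : 0 < 1 - q := by linarith
  set C : ℝ := α / (β * M * (1 - q)) with hCdef
  have hC : 0 < C := by positivity
  -- basic consequences for k ≥ N0
  have hd0 : ∀ k, N0 ≤ k → d k ≠ 0 := by
    intro k hk hdk
    have := (hN0 k hk).1.1
    rw [hiter k, hdk, smul_zero, add_zero] at this
    exact this rfl
  have hτpos : ∀ k, N0 ≤ k → 0 < τ k := fun k hk => lt_of_lt_of_le hτbar (hN0 k hk).2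
  have hdec : ∀ k, N0 ≤ k → f (x (k + 1)) < f (x k) := by
    intro k hk
    have h1 := (hN0 k hk).1.2.1
    have h2 : 0 < β * τ k * ‖d k‖ ^ 2 := by
      have := hd0 k hk
      have hd : 0 < ‖d k‖ := norm_pos_iff.mpr this
      have := hτpos k hk
      positivity
    linarith
  have hmono : ∀ k, N0 ≤ k → ∀ m, k ≤ m → f (x m) ≤ f (x k) := by
    intro k hk m hm
    induction m, hm using Nat.le_induction with
    | base => exact le_refl _
    | succ m hm ih => exact le_trans (hdec m (hk.trans hm)).le ih
  have hφj : ∀ j, j ≤ φ j := fun j => hφ.le_apply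
  have hftend : Tendsto (fun j => f (x (φ j))) atTop (𝓝 (f xbar)) :=
    (hf.continuous.tendsto xbar).comp hconv
  have hflb : ∀ k, N0 ≤ k → f xbar ≤ f (x k) := by
    intro k hk
    refine le_of_tendsto hftend ?_
    filter_upwards [eventually_ge_atTop k] with j hj
    exact hmono k hk (φ j) (hj.trans (hφj j))
  have hΔpos : ∀ k, N0 ≤ k → 0 < Δ k := by
    intro k hk
    have h1 := hdec k hk
    have h2 := hflb (k + 1) (hk.trans (Nat.le_succ k))
    simp only [hΔdef]
    linarith
  have hΔmono : ∀ k, N0 ≤ k → ∀ m, k ≤ m → Δ m ≤ Δ k := by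
    intro k hk m hm
    simp only [hΔdef]
    have := hmono k hk m hm
    linarith
  -- choice of ε and starting index K
  obtain ⟨ε, hε, hball⟩ := Metric.mem_nhds_iff.1 hU
  have hΔφ : Tendsto (fun j => Δ (φ j)) atTop (𝓝 0) := by
    have : Tendsto (fun j => f (x (φ j)) - f xbar) atTop (𝓝 (f xbar - f xbar)) :=
      hftend.sub_const _
    simpa using this
  have hΔφq : Tendsto (fun j => C * Δ (φ j) ^ (1 - q)) atTop (𝓝 0) := by
    have h1 : Tendsto (fun j => Δ (φ j) ^ (1 - q)) atTop (𝓝 ((0:ℝ) ^ (1 - q))) :=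
      hΔφ.rpow_const (Or.inr h1q.le)
    rw [Real.zero_rpow (ne_of_gt h1q)] at h1
    simpa using h1.const_mul C
  have hxφ : Tendsto (fun j => ‖x (φ j) - xbar‖) atTop (𝓝 0) := by
    have := (hconv.sub_const xbar).norm
    simpa using this
  obtain ⟨j₀, hj₀⟩ : ∃ j, N0 ≤ φ j ∧ Δ (φ j) < η ∧
      ‖x (φ j) - xbar‖ < ε / 2 ∧ C * Δ (φ j) ^ (1 - q) < ε / 2 := by
    have e1 : ∀ᶠ j in atTop, N0 ≤ φ j := by
      filter_upwards [eventually_ge_atTop N0] with j hj; exact hj.trans (hφj j)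
    have e2 : ∀ᶠ j in atTop, Δ (φ j) < η := hΔφ.eventually_lt_const hη
    have e3 : ∀ᶠ j in atTop, ‖x (φ j) - xbar‖ < ε / 2 :=
      hxφ.eventually_lt_const (by positivity)
    have e4 : ∀ᶠ j in atTop, C * Δ (φ j) ^ (1 - q) < ε / 2 :=
      hΔφq.eventually_lt_const (by positivity)
    exact ((e1.and (e2.and (e3.and e4))).exists).imp (fun j h => ⟨h.1, h.2.1, h.2.2.1, h.2.2.2⟩)
  set K : ℕ := φ j₀ with hKdef
  obtain ⟨hKN0, hKη, hKx, hKΔ⟩ := hj₀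
  set S : ℝ := ‖x K - xbar‖ + C * Δ K ^ (1 - q) with hSdef
  have hSε : S < ε := by simp only [hSdef]; linarith
  -- KL at iterates in the ball
  have hKL' : ∀ m, K ≤ m → x m ∈ Metric.ball xbar ε → M * Δ m ^ q ≤ ‖gradient f (x m)‖ := by
    intro m hm hmem
    have hmN0 : N0 ≤ m := hKN0.trans hm
    refine hKL (x m) (hball hmem) ?_ ?_
    · have := hΔpos m hmN0; simp only [hΔdef] at this; linarith
    · have := (hΔmono K hKN0 m hm).trans_lt hKη; simp only [hΔdef] at this; linarith
  -- one-step length estimate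
  have hstep : ∀ m, K ≤ m → x m ∈ Metric.ball xbar ε →
      ‖x (m + 1) - x m‖ ≤ C * (Δ m ^ (1 - q) - Δ (m + 1) ^ (1 - q)) := by
    intro m hm hmem
    have hmN0 : N0 ≤ m := hKN0.trans hm
    have hΔm := hΔpos m hmN0
    have hΔm1 := hΔpos (m + 1) (hmN0.trans (Nat.le_succ m))
    have hkl := hKL' m hm hmem
    have hgd := (hN0 m hmN0).1.2.2
    have hdd := (hN0 m hmN0).1.2.1
    have hdpos : 0 < ‖d m‖ := norm_pos_iff.mpr (hd0 m hmN0)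
    have hΔq : 0 < Δ m ^ q := Real.rpow_pos_of_pos hΔm q
    have hMd : M * Δ m ^ q ≤ α * ‖d m‖ := hkl.trans hgd
    have hnorm : ‖x (m + 1) - x m‖ = τ m * ‖d m‖ := by
      rw [hiter m, add_sub_cancel_left, norm_smul, Real.norm_eq_abs,
        abs_of_nonneg (hτnonneg m)]
    have hD : β * τ m * ‖d m‖ ^ 2 ≤ Δ m - Δ (m + 1) := by
      simp only [hΔdef]; linarith [hdd]
    have hconc := aux_concave hΔm1.le hΔm (by linarith : (0:ℝ) < q) hq1
    -- chain: τ m * ‖d m‖ * (β * M * (1-q)) * Δ m ^ q ≤ α * (Δ m ^ (1-q) - Δ (m+1) ^ (1-q)) * Δ m ^ q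
    have hτm := hτnonneg m
    have key : τ m * ‖d m‖ * (β * M * (1 - q)) * Δ m ^ q ≤
        α * (Δ m ^ q * (Δ m ^ (1 - q) - Δ (m + 1) ^ (1 - q))) := by
      have c1 : τ m * ‖d m‖ * (β * (1 - q)) * (M * Δ m ^ q) ≤
          τ m * ‖d m‖ * (β * (1 - q)) * (α * ‖d m‖) := by
        apply mul_le_mul_of_nonneg_left hMd
        positivity
      have c2 : τ m * ‖d m‖ * (β * (1 - q)) * (α * ‖d m‖) =
          α * (1 - q) * (β * τ m * ‖d m‖ ^ 2) := by ring
      have c3 : α * (1 - q) * (β * τ m * ‖d m‖ ^ 2) ≤ α * (1 - q) * (Δ m - Δ (m + 1)) := by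
        apply mul_le_mul_of_nonneg_left hD
        positivity
      have c4 : α * (1 - q) * (Δ m - Δ (m + 1)) ≤
          α * (Δ m ^ q * (Δ m ^ (1 - q) - Δ (m + 1) ^ (1 - q))) := by
        rw [mul_assoc α (1 - q) _]
        apply mul_le_mul_of_nonneg_left hconc hα.le
      calc τ m * ‖d m‖ * (β * M * (1 - q)) * Δ m ^ q
          = τ m * ‖d m‖ * (β * (1 - q)) * (M * Δ m ^ q) := by ring
        _ ≤ τ m * ‖d m‖ * (β * (1 - q)) * (α * ‖d m‖) := c1
        _ = α * (1 - q) * (β * τ m * ‖d m‖ ^ 2) := c2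
        _ ≤ α * (1 - q) * (Δ m - Δ (m + 1)) := c3
        _ ≤ _ := c4
    rw [hnorm]
    rw [hCdef]
    rw [div_mul_eq_mul_div, le_div_iff₀ (by positivity)]
    refine le_of_mul_le_mul_right ?_ hΔq
    calc τ m * ‖d m‖ * (β * M * (1 - q)) * Δ m ^ q
        ≤ α * (Δ m ^ q * (Δ m ^ (1 - q) - Δ (m + 1) ^ (1 - q))) := key
      _ = α * (Δ m ^ (1 - q) - Δ (m + 1) ^ (1 - q)) * Δ m ^ q := by ring
  -- stay in the ball
  have hstay : ∀ m, K ≤ m → ‖x m - xbar‖ + C * Δ m ^ (1 - q) ≤ S := by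
    intro m hm
    induction m, hm using Nat.le_induction with
    | base => simp [hSdef]
    | succ m hm ih =>
      have hmem : x m ∈ Metric.ball xbar ε := by
        have h1 : 0 < C * Δ m ^ (1 - q) := by
          have := Real.rpow_pos_of_pos (hΔpos m (hKN0.trans hm)) (1 - q)
          positivity
        have : ‖x m - xbar‖ < ε := by linarith [hSε]
        simpa [Metric.mem_ball, dist_eq_norm] using this
      have h2 := hstep m hm hmem
      have htri : ‖x (m + 1) - xbar‖ ≤ ‖x (m + 1) - x m‖ + ‖x m - xbar‖ := by
        have := norm_sub_le_norm_sub_add_norm_sub (x (m + 1)) (x m) xbar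
        linarith [this]
      nlinarith [h2, htri, ih]
  have hmem : ∀ m, K ≤ m → x m ∈ Metric.ball xbar ε := by
    intro m hm
    have h1 : 0 < C * Δ m ^ (1 - q) := by
      have := Real.rpow_pos_of_pos (hΔpos m (hKN0.trans hm)) (1 - q)
      positivity
    have := hstay m hm
    have : ‖x m - xbar‖ < ε := by linarith [hSε]
    simpa [Metric.mem_ball, dist_eq_norm] using this
  -- tail estimate
  have htail : ∀ k, K ≤ k → ∀ m, k ≤ m →
      ‖x m - x k‖ + C * Δ m ^ (1 - q) ≤ C * Δ k ^ (1 - q) := by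
    intro k hk m hm
    induction m, hm using Nat.le_induction with
    | base => simp
    | succ m hm ih =>
      have h2 := hstep m (hk.trans hm) (hmem m (hk.trans hm))
      have htri : ‖x (m + 1) - x k‖ ≤ ‖x (m + 1) - x m‖ + ‖x m - x k‖ := by
        have := norm_sub_le_norm_sub_add_norm_sub (x (m + 1)) (x m) (x k)
        linarith [this]
      nlinarith [h2, htri, ih]
  -- distance to xbar
  have hdist : ∀ k, K ≤ k → ‖x k - xbar‖ ≤ C * Δ k ^ (1 - q) := by
    intro k hk
    have htl : Tendsto (fun j => ‖x (φ j) - x k‖) atTop (𝓝 (‖xbar - x k‖)) := by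
      have := (hconv.sub_const (x k)).norm
      simpa using this
    have hle : ‖xbar - x k‖ ≤ C * Δ k ^ (1 - q) := by
      refine le_of_tendsto htl ?_
      filter_upwards [eventually_ge_atTop k] with j hj
      have h1 := htail k hk (φ j) (hj.trans (hφj j))
      have h2 : 0 ≤ C * Δ (φ j) ^ (1 - q) := by
        have := Real.rpow_pos_of_pos (hΔpos (φ j) (hKN0.trans (hk.trans (hj.trans (hφj j))))) (1 - q)
        positivity
      linarith
    rwa [norm_sub_rev]
  -- rate recursion
  set c : ℝ := β * τbar * (M / α) ^ 2 with hcdef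
  have hc : 0 < c := by positivity
  have hrate : ∀ m, K ≤ m → Δ (m + 1) ≤ Δ m - c * Δ m ^ (p + 1) := by
    intro m hm
    have hmN0 : N0 ≤ m := hKN0.trans hm
    have hΔm := hΔpos m hmN0
    have hkl := hKL' m hm (hmem m hm)
    have hgd := (hN0 m hmN0).1.2.2
    have hdd := (hN0 m hmN0).1.2.1
    have hτm := (hN0 m hmN0).2
    have hdge : M / α * Δ m ^ q ≤ ‖d m‖ := by
      rw [div_mul_eq_mul_div, div_le_iff₀ hα]
      calc M * Δ m ^ q ≤ ‖gradient f (x m)‖ := hkl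
        _ ≤ α * ‖d m‖ := hgd
        _ = ‖d m‖ * α := by ring
    have hΔq : 0 < Δ m ^ q := Real.rpow_pos_of_pos hΔm q
    have hsq : (M / α) ^ 2 * Δ m ^ (p + 1) ≤ ‖d m‖ ^ 2 := by
      have h1 : (M / α * Δ m ^ q) ^ 2 ≤ ‖d m‖ ^ 2 := by
        apply sq_le_sq' _ hdge
        have : 0 ≤ M / α * Δ m ^ q := by positivity
        linarith [norm_nonneg (d m)]
      have h2 : (M / α * Δ m ^ q) ^ 2 = (M / α) ^ 2 * Δ m ^ (p + 1) := by
        have : Δ m ^ q * Δ m ^ q = Δ m ^ (p + 1) := by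
          rw [← Real.rpow_add hΔm]
          congr 1
          simp only [hpdef]; ring
        rw [mul_pow]
        rw [sq (Δ m ^ q), this]
      linarith [h1, h2.symm.le]
    have hchain : c * Δ m ^ (p + 1) ≤ β * τ m * ‖d m‖ ^ 2 := by
      have h1 : β * τbar * ((M / α) ^ 2 * Δ m ^ (p + 1)) ≤ β * τbar * ‖d m‖ ^ 2 :=
        mul_le_mul_of_nonneg_left hsq (by positivity)
      have h2 : β * τbar * ‖d m‖ ^ 2 ≤ β * τ m * ‖d m‖ ^ 2 := by
        apply mul_le_mul_of_nonneg_right _ (by positivity)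
        exact mul_le_mul_of_nonneg_left hτm hβ.le
      calc c * Δ m ^ (p + 1) = β * τbar * ((M / α) ^ 2 * Δ m ^ (p + 1)) := by
            rw [hcdef]; ring
        _ ≤ β * τbar * ‖d m‖ ^ 2 := h1
        _ ≤ β * τ m * ‖d m‖ ^ 2 := h2
    have hdd' : β * τ m * ‖d m‖ ^ 2 ≤ Δ m - Δ (m + 1) := by
      simp only [hΔdef]; linarith [hdd]
    linarith
  -- inverse power grows linearly
  have hbk : ∀ m, K ≤ m → p * c * ((m : ℝ) - (K : ℝ)) ≤ Δ m ^ (-p) := by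
    intro m hm
    induction m, hm using Nat.le_induction with
    | base =>
      simp only [sub_self, mul_zero]
      exact (Real.rpow_pos_of_pos (hΔpos K hKN0) (-p)).le
    | succ m hm ih =>
      have hΔm := hΔpos m (hKN0.trans hm)
      have hΔm1 := hΔpos (m + 1) ((hKN0.trans hm).trans (Nat.le_succ m))
      have := aux_rate hΔm hΔm1 hc hp0 hp1.le (hrate m hm)
      push_cast
      push_cast at ih
      linarith
  -- final assembly
  set θ : ℝ := (1 - q) / p with hθdef
  have hθ : 0 < θ := by positivity
  refine ⟨C * (p * c) ^ (-θ) * 2 ^ θ, by positivity, 2 * K + 2, ?_⟩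
  intro k hk
  have hkK : K + 1 ≤ k := by omega
  have hkK' : K ≤ k := by omega
  have hΔk := hΔpos k (hKN0.trans hkK')
  have hk0 : (0:ℝ) < k := by exact_mod_cast (by omega : 0 < k)
  have hhalf : (k : ℝ) / 2 ≤ (k : ℝ) - (K : ℝ) := by
    have : (2 * K : ℕ) ≤ k := by omega
    have h2 : (2 * (K:ℝ)) ≤ (k:ℝ) := by exact_mod_cast this
    linarith
  have hhalfpos : (0:ℝ) < (k : ℝ) / 2 := by positivity
  have hkKpos : (0:ℝ) < (k : ℝ) - (K : ℝ) := lt_of_lt_of_le hhalfpos hhalf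
  -- Δ k ^ (1-q) ≤ (p c (k - K)) ^ (-θ)
  have h1 : Δ k ^ (1 - q) ≤ (p * c * ((k:ℝ) - (K:ℝ))) ^ (-θ) := by
    have hb := hbk k hkK'
    have hΔkp : Δ k ^ (1 - q) = (Δ k ^ (-p)) ^ (-θ) := by
      rw [← Real.rpow_mul hΔk.le]
      congr 1
      field_simp [hθdef]
      rw [hθdef]; field_simp [hp0.ne']
    rw [hΔkp]
    exact Real.rpow_le_rpow_of_nonpos (by positivity) hb (by linarith)
  -- split the product
  have h2 : (p * c * ((k:ℝ) - (K:ℝ))) ^ (-θ) = (p * c) ^ (-θ) * ((k:ℝ) - (K:ℝ)) ^ (-θ) :=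
    Real.mul_rpow (by positivity) hkKpos.le
  have h3 : ((k:ℝ) - (K:ℝ)) ^ (-θ) ≤ ((k:ℝ) / 2) ^ (-θ) :=
    Real.rpow_le_rpow_of_nonpos hhalfpos hhalf (by linarith)
  have h4 : ((k:ℝ) / 2) ^ (-θ) = 2 ^ θ * (k:ℝ) ^ (-θ) := by
    rw [Real.div_rpow hk0.le (by norm_num : (0:ℝ) ≤ 2)]
    rw [Real.rpow_neg (by norm_num : (0:ℝ) ≤ 2)]
    field_simp
  have hexp : -(1 - q) / (2 * q - 1) = -θ := by
    rw [hθdef, hpdef]; ring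
  rw [hexp]
  have hdk := hdist k hkK'
  have hpc : (0:ℝ) < (p * c) ^ (-θ) := Real.rpow_pos_of_pos (by positivity) _
  calc ‖x k - xbar‖ ≤ C * Δ k ^ (1 - q) := hdk
    _ ≤ C * ((p * c) ^ (-θ) * (((k:ℝ) - (K:ℝ)) ^ (-θ))) := by
        rw [← h2]; exact mul_le_mul_of_nonneg_left h1 hC.le
    _ ≤ C * ((p * c) ^ (-θ) * (2 ^ θ * (k:ℝ) ^ (-θ))) := by
        apply mul_le_mul_of_nonneg_left _ hC.le
        apply mul_le_mul_of_nonneg_left _ hpc.le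
        rw [← h4]; exact h3
    _ = C * (p * c) ^ (-θ) * 2 ^ θ * (k:ℝ) ^ (-θ) := by ring
end

section
/- Let f : ℝⁿ → ℝ be a C¹-smooth function whose gradient ∇f is globally Lipschitz continuous with some constant L > 0, let 𝒢 be a global approximation of ∇f, and let {x^k}, {g^k}, {δ_k}, {C_k} be the sequences generated by Algorithm DFC with parameters θ ∈ (0,1), μ > 2, r > 1, κ > 0. Assume that ∇f(x^k) ≠ 0 for all k ∈ ℕ and that {f(x^k)} is bounded below. If x̄ is an accumulation point of {x^k} and f satisfies the KL property at x̄, then x^k → x̄ as k → ∞. -/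
open Filter Topology MeasureTheory

section Aux

lemma descent_lemma {E : Type*} [NormedAddCommGroup E] [InnerProductSpace ℝ E]
    [CompleteSpace E]
    {f : E → ℝ} (hf : ∀ p, DifferentiableAt ℝ f p)
    {L : ℝ} (hL : 0 ≤ L)
    (hlip : ∀ y z, ‖gradient f y - gradient f z‖ ≤ L * ‖y - z‖)
    (p v : E) :
    f (p + v) ≤ f p + inner ℝ (gradient f p) v + L / 2 * ‖v‖ ^ 2 := by
  set c : ℝ → E := fun t => p + t • v with hc
  have hcd : ∀ t : ℝ, HasDerivAt c v t := by
    intro t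
    simpa [hc] using ((hasDerivAt_id t).smul_const v).const_add p
  have hh : ∀ t : ℝ, HasDerivAt (fun t => f (c t))
      (inner ℝ (gradient f (c t)) v : ℝ) t := by
    intro t
    have h1 : HasFDerivAt f (InnerProductSpace.toDual ℝ E (gradient f (c t))) (c t) :=
      (hf (c t)).hasGradientAt.hasFDerivAt
    have := h1.comp_hasDerivAt t (hcd t)
    rw [InnerProductSpace.toDual_apply_apply] at this; exact this
  set q : ℝ → ℝ := fun t => f (c t) - t * inner ℝ (gradient f p) v - L / 2 * t ^ 2 * ‖v‖ ^ 2
    with hq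
  have hqd : ∀ t : ℝ, HasDerivAt q
      ((inner ℝ (gradient f (c t)) v : ℝ) - inner ℝ (gradient f p) v - L * t * ‖v‖ ^ 2) t := by
    intro t
    have h2 : HasDerivAt (fun t : ℝ => t * (inner ℝ (gradient f p) v : ℝ))
        (inner ℝ (gradient f p) v : ℝ) t := by
      simpa using (hasDerivAt_id t).mul_const (inner ℝ (gradient f p) v : ℝ)
    have h3 : HasDerivAt (fun t : ℝ => L / 2 * t ^ 2 * ‖v‖ ^ 2)
        (L * t * ‖v‖ ^ 2) t := by
      have := ((hasDerivAt_pow 2 t).const_mul (L / 2)).mul_const (‖v‖ ^ 2)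
      exact this.congr_deriv (by rw [show (2:ℕ) - 1 = 1 from rfl]; push_cast; ring)
    exact ((hh t).sub h2).sub h3
  have hmono : AntitoneOn q (Set.Icc 0 1) := by
    apply antitoneOn_of_deriv_nonpos (convex_Icc 0 1)
    · exact fun t _ => ((hqd t).continuousAt).continuousWithinAt
    · intro t ht
      exact ((hqd t).differentiableAt).differentiableWithinAt
    · intro t ht
      rw [interior_Icc] at ht
      rw [(hqd t).deriv]
      have h5 : (inner ℝ (gradient f (c t)) v : ℝ) - inner ℝ (gradient f p) v
          = inner ℝ (gradient f (c t) - gradient f p) v := by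
        rw [inner_sub_left]
      rw [h5]
      have h6 : (inner ℝ (gradient f (c t) - gradient f p) v : ℝ)
          ≤ ‖gradient f (c t) - gradient f p‖ * ‖v‖ := real_inner_le_norm _ _
      have h7 : ‖gradient f (c t) - gradient f p‖ ≤ L * (t * ‖v‖) := by
        have := hlip (c t) p
        simpa [hc, norm_smul, abs_of_pos ht.1, mul_comm] using this
      nlinarith [norm_nonneg v, ht.1.le, mul_le_mul_of_nonneg_right h7 (norm_nonneg v)]
  have h01 : q 1 ≤ q 0 := hmono (by norm_num) (by norm_num) (by norm_num)
  simp only [hq, hc] at h01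
  simp only [one_smul, zero_smul, add_zero] at h01
  nlinarith [h01]

lemma phi_sub {ψ : ℝ → ℝ} {η : ℝ}
    (hint : IntegrableOn (fun t => 1 / ψ t) (Set.Ioo 0 η))
    {a b : ℝ} (hb : 0 ≤ b) (hba : b ≤ a) (ha : a < η) :
    (∫ s in Set.Ioc 0 a, 1 / ψ s) - (∫ s in Set.Ioc 0 b, 1 / ψ s)
      = ∫ s in Set.Ioc b a, 1 / ψ s := by
  have hsub : Set.Ioc (0:ℝ) a ⊆ Set.Ioo 0 η := fun s hs => ⟨hs.1, lt_of_le_of_lt hs.2 ha⟩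
  have h1 : IntegrableOn (fun t => 1 / ψ t) (Set.Ioc 0 b) :=
    hint.mono_set (fun s hs => hsub ⟨hs.1, hs.2.trans hba⟩)
  have h2 : IntegrableOn (fun t => 1 / ψ t) (Set.Ioc b a) :=
    hint.mono_set (fun s hs => hsub ⟨lt_of_le_of_lt hb hs.1, hs.2⟩)
  have hdisj : Disjoint (Set.Ioc (0:ℝ) b) (Set.Ioc b a) := by
    rw [Set.Ioc_disjoint_Ioc]
    simp [le_max_iff]
  have hunion : Set.Ioc (0:ℝ) b ∪ Set.Ioc b a = Set.Ioc 0 a :=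
    Set.Ioc_union_Ioc_eq_Ioc hb hba
  rw [← hunion, setIntegral_union hdisj measurableSet_Ioc h1 h2]
  ring

lemma phi_lb {ψ : ℝ → ℝ} {η : ℝ}
    (hpos : ∀ t ∈ Set.Ioo (0:ℝ) η, 0 < ψ t) (hmono : MonotoneOn ψ (Set.Ioo 0 η))
    (hint : IntegrableOn (fun t => 1 / ψ t) (Set.Ioo 0 η))
    {a b : ℝ} (hb : 0 < b) (hba : b ≤ a) (ha : a < η) :
    (a - b) / ψ a ≤ ∫ s in Set.Ioc b a, 1 / ψ s := by
  have haη : a ∈ Set.Ioo (0:ℝ) η := ⟨lt_of_lt_of_le hb hba, ha⟩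
  have hsub : Set.Ioc b a ⊆ Set.Ioo 0 η :=
    fun s hs => ⟨lt_of_le_of_lt hb.le hs.1, lt_of_le_of_lt hs.2 ha⟩
  have h2 : IntegrableOn (fun t => 1 / ψ t) (Set.Ioc b a) := hint.mono_set hsub
  have hc : IntegrableOn (fun _ : ℝ => 1 / ψ a) (Set.Ioc b a) :=
    integrableOn_const measure_Ioc_lt_top.ne
  have key : (∫ _ in Set.Ioc b a, 1 / ψ a) ≤ ∫ s in Set.Ioc b a, 1 / ψ s := by
    apply setIntegral_mono_on hc h2 measurableSet_Ioc
    intro s hs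
    have hsη := hsub hs
    exact one_div_le_one_div_of_le (hpos s hsη) (hmono hsη haη hs.2)
  calc (a - b) / ψ a = (a - b) * (1 / ψ a) := by ring
    _ = ∫ _ in Set.Ioc b a, 1 / ψ a := by
        rw [setIntegral_const, Real.volume_real_Ioc_of_le hba, smul_eq_mul]
    _ ≤ _ := key

lemma phi_nonneg {ψ : ℝ → ℝ} {η : ℝ}
    (hpos : ∀ t ∈ Set.Ioo (0:ℝ) η, 0 < ψ t) {a : ℝ} (ha : a < η) :
    0 ≤ ∫ s in Set.Ioc 0 a, 1 / ψ s := by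
  apply setIntegral_nonneg measurableSet_Ioc
  intro s hs
  exact le_of_lt (one_div_pos.2 (hpos s ⟨hs.1, lt_of_le_of_lt hs.2 ha⟩))

lemma phi_tendsto {ψ : ℝ → ℝ} {η : ℝ}
    (hint : IntegrableOn (fun t => 1 / ψ t) (Set.Ioo 0 η))
    {e : ℕ → ℝ} (heη : ∀ k, e k < η)
    (helim : Tendsto e atTop (𝓝 0)) :
    Tendsto (fun k => ∫ s in Set.Ioc 0 (e k), 1 / ψ s) atTop (𝓝 0) := by
  have hrw : ∀ k, (∫ s in Set.Ioc 0 (e k), 1 / ψ s)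
      = ∫ s in Set.Ioo 0 η, (Set.Ioc 0 (e k)).indicator (fun t => 1 / ψ t) s := by
    intro k
    have hss : Set.Ioo 0 η ∩ Set.Ioc 0 (e k) = Set.Ioc 0 (e k) :=
      Set.inter_eq_right.2 (fun s hs => ⟨hs.1, lt_of_le_of_lt hs.2 (heη k)⟩)
    rw [setIntegral_indicator measurableSet_Ioc, hss]
  simp_rw [hrw]
  have : Tendsto (fun k => ∫ s in Set.Ioo 0 η,
      (Set.Ioc 0 (e k)).indicator (fun t => 1 / ψ t) s) atTop
      (𝓝 (∫ _ in Set.Ioo 0 η, (0:ℝ))) := by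
    apply tendsto_integral_of_dominated_convergence (fun t => |1 / ψ t|)
    · intro k
      exact (hint.aestronglyMeasurable).indicator measurableSet_Ioc
    · exact hint.abs
    · intro k
      filter_upwards with s
      exact (norm_indicator_le_norm_self _ _).trans (le_of_eq (Real.norm_eq_abs _))
    · filter_upwards [self_mem_ae_restrict measurableSet_Ioo] with s hs
      have hs0 : 0 < s := hs.1
      have hev : ∀ᶠ k in atTop, (Set.Ioc 0 (e k)).indicator (fun t => 1 / ψ t) s = 0 := by
        have := helim.eventually (eventually_lt_nhds hs0)
        filter_upwards [this] with k hk
        exact Set.indicator_of_notMem (fun hmem => absurd hmem.2 (not_le.2 hk)) _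
      exact Tendsto.congr' (by filter_upwards [hev] with k hk; exact hk.symm) tendsto_const_nhds
  simpa using this


lemma arith1 {fnew f0 IP gn A L κ μ Ck : ℝ}
    (hA : 0 < A) (hL : 0 < L) (hκ : 0 < κ) (hμ : 2 < μ) (hCk : 0 < Ck) (hgn : 0 < gn)
    (hk : 4 * A / μ + 2 * L * κ ≤ Ck)
    (hIP : gn ^ 2 - A / (μ * Ck) * gn ^ 2 ≤ IP)
    (hdes : fnew ≤ f0 + -(κ / Ck * IP) + L / 2 * (κ / Ck * gn) ^ 2) :
    fnew ≤ f0 - κ * (μ - 2) / (2 * Ck * μ) * gn ^ 2 := by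
  have hμ0 : (0:ℝ) < μ := by linarith
  set u : ℝ := κ / Ck with hu'
  have hu : 0 < u := div_pos hκ hCk
  set a : ℝ := A / (μ * Ck) with ha'
  have h41 : 4 * A ≤ μ * Ck := by
    have e : μ * (4 * A / μ) = 4 * A := by field_simp
    nlinarith [mul_le_mul_of_nonneg_left hk hμ0.le, mul_pos (mul_pos hμ0 hL) hκ]
  have ha1 : a ≤ 1 / 4 := by
    rw [ha', div_le_div_iff₀ (mul_pos hμ0 hCk) (by norm_num : (0:ℝ) < 4)]
    linarith
  have hb1 : L / 2 * u ≤ 1 / 4 := by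
    have hAμ : 0 < 4 * A / μ := div_pos (by linarith) hμ0
    have h2 : 2 * L * κ ≤ Ck := by linarith
    have e : L / 2 * u = L * κ / (2 * Ck) := by
      rw [hu', div_mul_div_comm]
    rw [e, div_le_div_iff₀ (by linarith) (by norm_num : (0:ℝ) < 4)]
    linarith
  have hdes2 : fnew ≤ f0 - u * IP + L / 2 * u ^ 2 * gn ^ 2 := by
    have e : L / 2 * (u * gn) ^ 2 = L / 2 * u ^ 2 * gn ^ 2 := by ring
    linarith [hdes, e.le, e.ge]
  have hIP2 : u * (gn ^ 2 - a * gn ^ 2) ≤ u * IP := mul_le_mul_of_nonneg_left hIP hu.le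
  have hgoal : κ * (μ - 2) / (2 * Ck * μ) = u * ((μ - 2) / (2 * μ)) := by
    rw [hu', div_mul_div_comm]
    congr 1
    ring
  rw [hgoal]
  have h8 : (μ - 2) / (2 * μ) ≤ 1 / 2 := by
    rw [div_le_div_iff₀ (by linarith) (by norm_num : (0:ℝ) < 2)]
    linarith
  have hcoef : 0 ≤ 1 - a - L / 2 * u - (μ - 2) / (2 * μ) := by linarith
  have hprod : 0 ≤ u * gn ^ 2 * (1 - a - L / 2 * u - (μ - 2) / (2 * μ)) :=
    mul_nonneg (mul_nonneg hu.le (sq_nonneg gn)) hcoef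
  nlinarith [hprod]

lemma arith2 {κ CK c1 c2 gn ψv D Δ : ℝ} (hκ : 0 < κ) (hCK : 0 < CK) (hc1 : 0 < c1)
    (hc2 : 0 < c2) (hgn : 0 < gn) (hψ : 0 < ψv)
    (hdec : c1 * gn ^ 2 ≤ D) (hψle : ψv ≤ c2 * gn) (hΔ : D / ψv ≤ Δ) :
    κ / CK * gn ≤ c2 * κ / (c1 * CK) * Δ := by
  have hD0 : 0 ≤ D := le_trans (mul_nonneg hc1.le (sq_nonneg gn)) hdec
  have h1 : c1 * gn ^ 2 / (c2 * gn) ≤ D / ψv := div_le_div₀ hD0 hdec hψ hψle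
  have h2 : c1 * gn ^ 2 / (c2 * gn) = c1 / c2 * gn := by
    field_simp
  have h3 : c1 / c2 * gn ≤ Δ := by
    rw [← h2]
    exact le_trans h1 hΔ
  have hM : 0 < c2 * κ / (c1 * CK) := div_pos (mul_pos hc2 hκ) (mul_pos hc1 hCK)
  have h4 := mul_le_mul_of_nonneg_left h3 hM.le
  have h5 : c2 * κ / (c1 * CK) * (c1 / c2 * gn) = κ / CK * gn := by
    field_simp
  linarith [h4, h5.le, h5.ge]

end Aux

set_option maxHeartbeats 4000000 in
/-- For Algorithm DFC, if {f(x^k)} is bounded below, x̄ is an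
accumulation point of {x^k}, and f satisfies the KL property at x̄, then x^k → x̄. -/
theorem stmt_12 {n : ℕ} (f : EuclideanSpace ℝ (Fin n) → ℝ) (hf : ContDiff ℝ 1 f)
    (L : ℝ) (hL : 0 < L)
    (hlip : ∀ y z : EuclideanSpace ℝ (Fin n),
      ‖gradient f y - gradient f z‖ ≤ L * ‖y - z‖)
    (G : EuclideanSpace ℝ (Fin n) → ℝ → EuclideanSpace ℝ (Fin n))
    (hG : ∃ C > (0 : ℝ), ∀ y : EuclideanSpace ℝ (Fin n), ∀ δ : ℝ, 0 < δ →
      ‖G y δ - gradient f y‖ ≤ C * δ)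
    (θ μ r κ : ℝ) (hθ : θ ∈ Set.Ioo (0 : ℝ) 1) (hμ : 2 < μ) (hr : 1 < r) (hκ : 0 < κ)
    (x g : ℕ → EuclideanSpace ℝ (Fin n)) (δseq Cs : ℕ → ℝ)
    (hδpos : ∀ k, 0 < δseq k) (hCpos : ∀ k, 0 < Cs k)
    (hstep1 : ∀ k, ∃ i : ℕ, δseq (k + 1) = θ ^ i * δseq k ∧
      g k = G (x k) (δseq (k + 1)) ∧ μ * Cs k * δseq (k + 1) < ‖g k‖)
    (hstep2 : ∀ k,
      (f (x k - (κ / Cs k) • g k) ≤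
          f (x k) - (κ * (μ - 2) / (2 * Cs k * μ)) * ‖g k‖ ^ 2 ∧
        x (k + 1) = x k - (κ / Cs k) • g k ∧ Cs (k + 1) = Cs k) ∨
      (¬ (f (x k - (κ / Cs k) • g k) ≤
          f (x k) - (κ * (μ - 2) / (2 * Cs k * μ)) * ‖g k‖ ^ 2) ∧
        x (k + 1) = x k ∧ Cs (k + 1) = r * Cs k))
    (hgrad : ∀ k, gradient f (x k) ≠ 0)
    (hbelow : ∃ B : ℝ, ∀ k, B ≤ f (x k))
    (xbar : EuclideanSpace ℝ (Fin n))
    (hacc : ∃ φ : ℕ → ℕ, StrictMono φ ∧ Tendsto (fun j => x (φ j)) atTop (𝓝 xbar))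
    (hKL : ∃ η > (0 : ℝ), ∃ U ∈ 𝓝 xbar, ∃ ψ : ℝ → ℝ,
      (∀ t ∈ Set.Ioo (0 : ℝ) η, 0 < ψ t) ∧ MonotoneOn ψ (Set.Ioo (0 : ℝ) η) ∧
      MeasureTheory.IntegrableOn (fun t => 1 / ψ t) (Set.Ioo (0 : ℝ) η) ∧
      ∀ y ∈ U, f xbar < f y → f y < f xbar + η → ψ (f y - f xbar) ≤ ‖gradient f y‖) :
    Tendsto x atTop (𝓝 xbar) := by
  obtain ⟨A, hA, hGa⟩ := hG
  have hμ0 : (0:ℝ) < μ := by linarith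
  have hdiff : ∀ p, DifferentiableAt ℝ f p :=
    fun p => (hf.differentiable one_ne_zero).differentiableAt
  have hcont : Continuous f := hf.continuous
  -- basic facts about g
  have hgpos : ∀ k, 0 < ‖g k‖ := by
    intro k
    obtain ⟨i, _, _, hi3⟩ := hstep1 k
    have : (0:ℝ) < μ * Cs k * δseq (k+1) :=
      mul_pos (mul_pos hμ0 (hCpos k)) (hδpos (k+1))
    linarith
  have happ : ∀ k, ‖g k - gradient f (x k)‖ ≤ A * δseq (k+1) := by
    intro k
    obtain ⟨i, _, hi2, _⟩ := hstep1 k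
    rw [hi2]
    exact hGa _ _ (hδpos _)
  have hdle : ∀ k, δseq (k+1) ≤ ‖g k‖ / (μ * Cs k) := by
    intro k
    obtain ⟨i, _, _, hi3⟩ := hstep1 k
    rw [le_div_iff₀ (mul_pos hμ0 (hCpos k))]
    calc δseq (k+1) * (μ * Cs k) = μ * Cs k * δseq (k+1) := by ring
      _ ≤ ‖g k‖ := hi3.le
  -- the success condition
  set S : ℕ → Prop := fun k => f (x k - (κ / Cs k) • g k) ≤
      f (x k) - (κ * (μ - 2) / (2 * Cs k * μ)) * ‖g k‖ ^ 2 with hSdef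
  -- Claim 1 : if Cs k is large then step k succeeds
  have hclaim1 : ∀ k, 4 * A / μ + 2 * L * κ ≤ Cs k → S k := by
    intro k hk
    have hIP : ‖g k‖ ^ 2 - A / (μ * Cs k) * ‖g k‖ ^ 2
        ≤ inner ℝ (gradient f (x k)) (g k) := by
      have e1 : (inner ℝ (gradient f (x k)) (g k) : ℝ)
          = ‖g k‖ ^ 2 - inner ℝ (g k - gradient f (x k)) (g k) := by
        rw [inner_sub_left, real_inner_self_eq_norm_sq]
        ring
      have e2 : (inner ℝ (g k - gradient f (x k)) (g k) : ℝ)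
          ≤ ‖g k - gradient f (x k)‖ * ‖g k‖ := real_inner_le_norm _ _
      have e3 : ‖g k - gradient f (x k)‖ * ‖g k‖ ≤ (A * (‖g k‖ / (μ * Cs k))) * ‖g k‖ := by
        apply mul_le_mul_of_nonneg_right _ (hgpos k).le
        exact le_trans (happ k) (mul_le_mul_of_nonneg_left (hdle k) hA.le)
      have e4 : (A * (‖g k‖ / (μ * Cs k))) * ‖g k‖ = A / (μ * Cs k) * ‖g k‖ ^ 2 := by
        ring
      rw [e1]
      linarith [e2, e3, e4.le, e4.ge]
    have hdes := descent_lemma hdiff hL.le hlip (x k) (-((κ / Cs k) • g k))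
    rw [← sub_eq_add_neg, inner_neg_right, real_inner_smul_right, norm_neg, norm_smul,
      Real.norm_eq_abs, abs_of_pos (div_pos hκ (hCpos k))] at hdes
    exact arith1 hA hL hκ hμ (hCpos k) (hgpos k) hk hIP hdes
  -- Cs is nondecreasing
  have hCsmono : ∀ k l, k ≤ l → Cs k ≤ Cs l := by
    intro k l hkl
    induction l with
    | zero => simp_all
    | succ m ih =>
      rcases Nat.lt_or_ge k (m+1) with h | h
      · have hkm : k ≤ m := Nat.lt_succ_iff.1 h
        have h1 : Cs m ≤ Cs (m+1) := by
          rcases hstep2 m with ⟨_, _, hc⟩ | ⟨_, _, hc⟩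
          · rw [hc]
          · rw [hc]
            nlinarith [hCpos m]
        exact le_trans (ih hkm) h1
      · have : k = m + 1 := le_antisymm hkl h
        rw [this]
  -- eventually all steps succeed
  have hSev : ∃ K, ∀ k, K ≤ k → S k := by
    by_contra hns
    push_neg at hns
    -- failures are unbounded, so Cs is unbounded
    have hgrow : ∀ m : ℕ, ∃ k, r ^ m * Cs 0 ≤ Cs k := by
      intro m
      induction m with
      | zero => exact ⟨0, by simp⟩
      | succ m ih =>
        obtain ⟨k, hkm⟩ := ih
        obtain ⟨k', hk'one, hk'two⟩ := hns k
        have h1 : Cs k ≤ Cs k' := hCsmono k k' hk'one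
        have h2 : Cs (k' + 1) = r * Cs k' := by
          rcases hstep2 k' with ⟨hgood, _, _⟩ | ⟨_, _, hc⟩
          · exact absurd hgood hk'two
          · exact hc
        refine ⟨k' + 1, ?_⟩
        rw [h2, pow_succ]
        calc r ^ m * r * Cs 0 = r * (r ^ m * Cs 0) := by ring
          _ ≤ r * Cs k := by nlinarith [lt_trans one_pos hr]
          _ ≤ r * Cs k' := by nlinarith [lt_trans one_pos hr]
    -- find k0 with Cs k0 large
    obtain ⟨m, hm⟩ := (tendsto_pow_atTop_atTop_of_one_lt hr).eventually_ge_atTop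
      ((4 * A / μ + 2 * L * κ) / Cs 0) |>.exists
    obtain ⟨k0, hk0⟩ := hgrow m
    have hbig : 4 * A / μ + 2 * L * κ ≤ Cs k0 := by
      have := (div_le_iff₀ (hCpos 0)).1 hm
      linarith
    -- from k0 on everything succeeds
    have hall : ∀ j : ℕ, S (k0 + j) ∧ Cs (k0 + j) = Cs k0 := by
      intro j
      induction j with
      | zero => exact ⟨hclaim1 k0 hbig, rfl⟩
      | succ j ih =>
        have hCs : Cs (k0 + j + 1) = Cs (k0 + j) := by
          rcases hstep2 (k0 + j) with ⟨_, _, hc⟩ | ⟨hbad, _, _⟩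
          · exact hc
          · exact absurd ih.1 hbad
        have hCs' : Cs (k0 + (j+1)) = Cs k0 := by
          rw [← Nat.add_assoc, hCs, ih.2]
        exact ⟨hclaim1 _ (hCs' ▸ hbig), hCs'⟩
    obtain ⟨k', hk'one, hk'two⟩ := hns k0
    obtain ⟨j, rfl⟩ := Nat.exists_eq_add_of_le hk'one
    exact hk'two (hall j).1
  obtain ⟨K, hK⟩ := hSev
  -- Cs is constant from K on
  have hCconst : ∀ k, K ≤ k → Cs k = Cs K := by
    intro k hk
    obtain ⟨j, rfl⟩ := Nat.exists_eq_add_of_le hk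
    induction j with
    | zero => rfl
    | succ j ih =>
      have hCs : Cs (K + j + 1) = Cs (K + j) := by
        rcases hstep2 (K + j) with ⟨_, _, hc⟩ | ⟨hbad, _, _⟩
        · exact hc
        · exact absurd (hK (K + j) (Nat.le_add_right K j)) hbad
      rw [← Nat.add_assoc, hCs, ih (Nat.le_add_right K j)]
  -- step facts after stabilization
  set c1 : ℝ := κ * (μ - 2) / (2 * Cs K * μ) with hc1def
  have hc1 : 0 < c1 := div_pos (mul_pos hκ (by linarith)) (by
    have := hCpos K
    nlinarith)
  have hsucc : ∀ k, K ≤ k → f (x (k+1)) ≤ f (x k) - c1 * ‖g k‖ ^ 2 ∧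
      x (k+1) = x k - (κ / Cs K) • g k := by
    intro k hk
    have hCk : Cs k = Cs K := hCconst k hk
    rcases hstep2 k with ⟨hgood, hx, _⟩ | ⟨hbad, _, _⟩
    · rw [hCk] at hgood hx
      rw [← hc1def] at hgood
      exact ⟨by rw [hx]; exact hgood, hx⟩
    · exact absurd (hK k hk) hbad
  obtain ⟨φ, hφmono, hφlim⟩ := hacc
  obtain ⟨B, hB⟩ := hbelow
  have hfanti : ∀ k l, K ≤ k → k ≤ l → f (x l) ≤ f (x k) := by
    intro k l hk hkl
    induction l with
    | zero =>
      have : k = 0 := Nat.le_zero.1 hkl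
      rw [this]
    | succ m ih =>
      rcases Nat.lt_or_ge k (m+1) with h | h
      · have hkm : k ≤ m := Nat.lt_succ_iff.1 h
        have hKm : K ≤ m := le_trans hk hkm
        have h1 := (hsucc m hKm).1
        have h2 : 0 ≤ c1 * ‖g m‖ ^ 2 := mul_nonneg hc1.le (sq_nonneg _)
        have := ih hkm
        linarith
      · have : k = m + 1 := le_antisymm hkl h
        rw [this]
  set v : ℕ → ℝ := fun m => f (x (K + m)) with hvdef
  have hvanti : Antitone v := by
    apply antitone_nat_of_succ_le
    intro m
    exact hfanti (K + m) (K + m + 1) (Nat.le_add_right K m) (Nat.le_succ _)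
  have hvbdd : BddBelow (Set.range v) := ⟨B, by rintro _ ⟨m, rfl⟩; exact hB _⟩
  have hvlim : Tendsto v atTop (𝓝 (⨅ m, v m)) := tendsto_atTop_ciInf hvanti hvbdd
  have hflim : Tendsto (fun k => f (x k)) atTop (𝓝 (⨅ m, v m)) := by
    have h1 : Tendsto (fun k : ℕ => v (k - K)) atTop (𝓝 (⨅ m, v m)) :=
      hvlim.comp (tendsto_sub_atTop_nat K)
    apply h1.congr'
    filter_upwards [eventually_ge_atTop K] with k hk
    simp only [hvdef]
    rw [Nat.add_sub_cancel' hk]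
  have hℓ : (⨅ m, v m) = f xbar :=
    tendsto_nhds_unique (hflim.comp hφmono.tendsto_atTop) ((hcont.tendsto xbar).comp hφlim)
  rw [hℓ] at hflim
  have hfge : ∀ k, K ≤ k → f xbar ≤ f (x k) := by
    intro k hk
    apply le_of_tendsto hflim
    filter_upwards [eventually_ge_atTop k] with l hl
    exact hfanti k l hk hl
  have hfgt : ∀ k, K ≤ k → f xbar < f (x k) := by
    intro k hk
    rcases (hfge k hk).lt_or_eq with h | h
    · exact h
    · exfalso
      have h1 := (hsucc k hk).1
      have h2 := hfge (k+1) (le_trans hk (Nat.le_succ k))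
      have h3 : 0 < c1 * ‖g k‖ ^ 2 := mul_pos hc1 (pow_pos (hgpos k) 2)
      linarith
  -- KL setup
  obtain ⟨η, hη, U, hU, ψ, hψpos, hψmono, hψint, hψKL⟩ := hKL
  obtain ⟨ρ, hρ, hball⟩ := Metric.mem_nhds_iff.1 hU
  set e : ℕ → ℝ := fun k => f (x k) - f xbar with hedef
  have hepos : ∀ k, K ≤ k → 0 < e k := fun k hk => sub_pos.2 (hfgt k hk)
  have heanti : ∀ k l, K ≤ k → k ≤ l → e l ≤ e k :=
    fun k l hk hkl => sub_le_sub_right (hfanti k l hk hkl) _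
  have helim : Tendsto e atTop (𝓝 0) := by
    have := hflim.sub_const (f xbar)
    simpa using this
  obtain ⟨K₁, hK₁⟩ := eventually_atTop.1
    ((helim.eventually_lt_const hη).and (eventually_ge_atTop K))
  set Φ : ℝ → ℝ := fun t => ∫ s in Set.Ioc 0 t, 1 / ψ s with hΦdef
  set M : ℝ := (1 + A / (μ * Cs K)) * κ / (c1 * Cs K) with hMdef
  have hc2pos : 0 < 1 + A / (μ * Cs K) := by
    have : 0 < A / (μ * Cs K) := div_pos hA (mul_pos hμ0 (hCpos K))
    linarith
  have hM : 0 < M := div_pos (mul_pos hc2pos hκ) (mul_pos hc1 (hCpos K))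
  -- the key per-step estimate
  have hkey : ∀ k, K₁ ≤ k → x k ∈ U → ‖x (k+1) - x k‖ ≤ M * (Φ (e k) - Φ (e (k+1))) := by
    intro k hk hxU
    have hKk : K ≤ k := (hK₁ k hk).2
    have he1 : 0 < e k := hepos k hKk
    have he2 : e k < η := (hK₁ k hk).1
    have he3 : 0 < e (k+1) := hepos (k+1) (le_trans hKk (Nat.le_succ k))
    have he4 : e (k+1) ≤ e k := heanti k (k+1) hKk (Nat.le_succ k)
    have hψval : 0 < ψ (e k) := hψpos _ ⟨he1, he2⟩
    have hKLk : ψ (e k) ≤ ‖gradient f (x k)‖ := by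
      have := hψKL (x k) hxU (hfgt k hKk) (by
        have : e k = f (x k) - f xbar := rfl
        linarith)
      exact this
    have hg2 : ‖gradient f (x k)‖ ≤ (1 + A / (μ * Cs K)) * ‖g k‖ := by
      have h0 : gradient f (x k) = g k - (g k - gradient f (x k)) := by abel
      have h1 : ‖gradient f (x k)‖ ≤ ‖g k‖ + ‖g k - gradient f (x k)‖ := by
        conv_lhs => rw [h0]
        exact norm_sub_le _ _
      have h2 : ‖g k - gradient f (x k)‖ ≤ A * (‖g k‖ / (μ * Cs K)) := by
        have := le_trans (happ k) (mul_le_mul_of_nonneg_left (hdle k) hA.le)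
        rwa [hCconst k hKk] at this
      have h3 : ‖g k‖ + A * (‖g k‖ / (μ * Cs K)) = (1 + A / (μ * Cs K)) * ‖g k‖ := by
        ring
      linarith
    have hdec : c1 * ‖g k‖ ^ 2 ≤ e k - e (k+1) := by
      have h1 := (hsucc k hKk).1
      have h2 : e k - e (k+1) = f (x k) - f (x (k+1)) := by
        simp only [hedef]
        ring
      linarith
    have hΦdiff : (e k - e (k+1)) / ψ (e k) ≤ Φ (e k) - Φ (e (k+1)) := by
      have h1 : Φ (e k) - Φ (e (k+1)) = ∫ s in Set.Ioc (e (k+1)) (e k), 1 / ψ s :=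
        phi_sub hψint he3.le he4 he2
      rw [h1]
      exact phi_lb hψpos hψmono hψint he3 he4 he2
    have hnorm : ‖x (k+1) - x k‖ = κ / Cs K * ‖g k‖ := by
      rw [(hsucc k hKk).2]
      have h9 : x k - (κ / Cs K) • g k - x k = -((κ / Cs K) • g k) := by abel
      rw [h9, norm_neg, norm_smul, Real.norm_eq_abs,
        abs_of_pos (div_pos hκ (hCpos K))]
    rw [hnorm, hMdef]
    exact arith2 hκ (hCpos K) hc1 hc2pos (hgpos k) hψval hdec (le_trans hKLk hg2) hΦdiff
  -- nonnegativity and monotonicity of Φ ∘ e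
  have hΦnonneg : ∀ k, K₁ ≤ k → 0 ≤ Φ (e k) := fun k hk => phi_nonneg hψpos (hK₁ k hk).1
  have hΦmono : ∀ k l, K₁ ≤ k → k ≤ l → Φ (e l) ≤ Φ (e k) := by
    intro k l hk hkl
    have hKk : K ≤ k := (hK₁ k hk).2
    have hKl : K ≤ l := le_trans hKk hkl
    have h1 : Φ (e k) - Φ (e l) = ∫ s in Set.Ioc (e l) (e k), 1 / ψ s :=
      phi_sub hψint (hepos l hKl).le (heanti k l hKk hkl) (hK₁ k hk).1
    have h2 : 0 ≤ ∫ s in Set.Ioc (e l) (e k), 1 / ψ s := by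
      apply MeasureTheory.setIntegral_nonneg measurableSet_Ioc
      intro s hs
      have hsmem : s ∈ Set.Ioo (0:ℝ) η :=
        ⟨lt_of_le_of_lt (hepos l hKl).le hs.1, lt_of_le_of_lt hs.2 (hK₁ k hk).1⟩
      exact (one_div_pos.2 (hψpos s hsmem)).le
    linarith
  have hΦet : Tendsto (fun m => M * Φ (e (m + K₁))) atTop (𝓝 0) := by
    have h1 : Tendsto (fun m => Φ (e (m + K₁))) atTop (𝓝 0) :=
      phi_tendsto hψint (fun m => (hK₁ _ (Nat.le_add_left K₁ m)).1)
        (helim.comp (tendsto_add_atTop_nat K₁))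
    simpa using h1.const_mul M
  obtain ⟨m₂, hm₂⟩ := eventually_atTop.1 (hΦet.eventually_lt_const (half_pos hρ))
  set K₂ : ℕ := m₂ + K₁ with hK₂def
  have hK₂prop : ∀ k, K₂ ≤ k → M * Φ (e k) < ρ / 2 := by
    intro k hk
    have h1 : Φ (e k) ≤ Φ (e K₂) := hΦmono K₂ k (Nat.le_add_left K₁ m₂) hk
    have h2 := hm₂ m₂ le_rfl
    nlinarith
  -- choose the start index N on the subsequence
  have hev1 : ∀ᶠ j in atTop, K₂ ≤ φ j := hφmono.tendsto_atTop.eventually_ge_atTop K₂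
  have hev2 : ∀ᶠ j in atTop, dist (x (φ j)) xbar < ρ / 2 :=
    Metric.tendsto_nhds.1 hφlim (ρ/2) (half_pos hρ)
  obtain ⟨j₀, hj₁, hj₂⟩ := (hev1.and hev2).exists
  set N : ℕ := φ j₀ with hNdef
  have hN1 : K₂ ≤ N := hj₁
  have hN1' : K₁ ≤ N := le_trans (Nat.le_add_left K₁ m₂) hN1
  have hN2 : ‖x N - xbar‖ < ρ / 2 := by rwa [← dist_eq_norm]
  -- main induction: trajectory stays in the ball
  have hmain : ∀ m : ℕ, ‖x (N + m) - xbar‖ + M * Φ (e (N + m))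
      ≤ ‖x N - xbar‖ + M * Φ (e N) := by
    intro m
    induction m with
    | zero => simp
    | succ m ih =>
      have hk1 : K₁ ≤ N + m := le_trans hN1' (Nat.le_add_right N m)
      have hxU : x (N + m) ∈ U := by
        apply hball
        rw [Metric.mem_ball, dist_eq_norm]
        have h1 : 0 ≤ M * Φ (e (N + m)) := mul_nonneg hM.le (hΦnonneg _ hk1)
        have h2 : M * Φ (e N) < ρ / 2 := hK₂prop N hN1
        linarith
      have hstepb := hkey (N + m) hk1 hxU
      have htri := dist_triangle (x (N + m + 1)) (x (N + m)) xbar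
      rw [dist_eq_norm, dist_eq_norm, dist_eq_norm] at htri
      have heq : N + (m + 1) = N + m + 1 := rfl
      rw [heq]
      linarith
  have hxU : ∀ m : ℕ, x (N + m) ∈ U := by
    intro m
    apply hball
    rw [Metric.mem_ball, dist_eq_norm]
    have hk1 : K₁ ≤ N + m := le_trans hN1' (Nat.le_add_right N m)
    have h1 : 0 ≤ M * Φ (e (N + m)) := mul_nonneg hM.le (hΦnonneg _ hk1)
    have h2 : M * Φ (e N) < ρ / 2 := hK₂prop N hN1
    have := hmain m
    linarith
  have hstep : ∀ m : ℕ, ‖x (N + m + 1) - x (N + m)‖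
      ≤ M * (Φ (e (N + m)) - Φ (e (N + m + 1))) := by
    intro m
    exact hkey (N + m) (le_trans hN1' (Nat.le_add_right N m)) (hxU m)
  -- summability of the step lengths
  have htel : ∀ m : ℕ, ∑ i ∈ Finset.range m, dist (x (N + i)) (x (N + i + 1))
      ≤ M * Φ (e N) := by
    intro m
    have h1 : ∑ i ∈ Finset.range m, dist (x (N + i)) (x (N + i + 1))
        ≤ ∑ i ∈ Finset.range m, M * (Φ (e (N + i)) - Φ (e (N + i + 1))) := by
      apply Finset.sum_le_sum
      intro i _
      rw [dist_eq_norm, norm_sub_rev]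
      exact hstep i
    have h2 : ∑ i ∈ Finset.range m, M * (Φ (e (N + i)) - Φ (e (N + i + 1)))
        = M * (Φ (e N) - Φ (e (N + m))) := by
      rw [← Finset.mul_sum]
      congr 1
      have h3 := Finset.sum_range_sub' (fun i => Φ (e (N + i))) m
      simpa [Nat.add_assoc] using h3
    have h3 : 0 ≤ Φ (e (N + m)) := hΦnonneg _ (le_trans hN1' (Nat.le_add_right N m))
    have h4 : 0 ≤ M * Φ (e (N + m)) := mul_nonneg hM.le h3
    calc ∑ i ∈ Finset.range m, dist (x (N + i)) (x (N + i + 1))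
        ≤ M * (Φ (e N) - Φ (e (N + m))) := by rw [← h2]; exact h1
      _ ≤ M * Φ (e N) := by
          have : M * (Φ (e N) - Φ (e (N + m))) = M * Φ (e N) - M * Φ (e (N + m)) := by ring
          linarith
  have hsum : Summable (fun m => dist (x (N + m)) (x (N + m + 1))) :=
    summable_of_sum_range_le (fun m => dist_nonneg) htel
  have hsum2 : Summable (fun m => dist (x (m + N)) (x (m + N + 1))) := by
    apply hsum.congr
    intro m
    rw [Nat.add_comm N m]
  have hsum' : Summable (fun m => dist (x m) (x (m + 1))) :=
    (summable_nat_add_iff N).1 hsum2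
  have hcauchy : CauchySeq x := cauchySeq_of_summable_dist hsum'
  obtain ⟨l', hl'⟩ := cauchySeq_tendsto_of_complete hcauchy
  have hluniq : l' = xbar := tendsto_nhds_unique (hl'.comp hφmono.tendsto_atTop) hφlim
  rwa [hluniq] at hl'
end
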